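/- arXiv:2508.11587 — 2 statements merged into one kernel-verified Lean document; each statement's English description precedes it below -/
import Mathlib

section
/- For n >= 1, the total number of inversions across all parking functions of length n is (n(n+1)^{n-2}/2) * C(n,2). -/
/-- A parking function of length `n` as a word in `[n]^n` (0-indexed values): its
weakly increasing rearrangement `b` satisfies `b i ≤ i` (0-indexed). -/
def IsPF (n : ℕ) (α : Fin n → Fin n) : Prop :=
  ∃ σ : Equiv.Perm (Fin n),
    (∀ i j : Fin n, i ≤ j → α (σ i) ≤ α (σ j)) ∧
    ∀ i : Fin n, (α (σ i) : ℕ) ≤ (i : ℕ)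

instance (n : ℕ) : DecidablePred (IsPF n) := fun _ => by unfold IsPF; infer_instance

/-- The number of inversions of a word: pairs `(i,j)` with `i < j` and `α i > α j`. -/
def invCount (n : ℕ) (α : Fin n → Fin n) : ℕ :=
  (Finset.univ.filter (fun p : Fin n × Fin n => p.1 < p.2 ∧ α p.2 < α p.1)).card

/-!
Pollak's cycle argument: for every word `f ∈ (ℤ/(n+1))^n` exactly one of the `n + 1` translates
`f - c` is a parking function. This is the cycle lemma for the prefix sums of
`#f⁻¹(a) - 1`, which add up to `-1` over a period. Hence
`(n+1) · #{α ∈ PF_n | Q α} = #{f | Q f}` for every translation-invariant property `Q`; with `Q`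
trivial and `Q = (f i = f j)` this gives `|PF_n| = (n+1)^{n-1}` and
`#{α ∈ PF_n | α i = α j} = (n+1)^{n-2}`. Swapping positions `i` and `j` preserves `PF_n`, so
for `i < j` exactly half of the remaining `n (n+1)^{n-2}` parking functions have `α j < α i`;
summing over the `C(n,2)` pairs gives the total.
-/

open Finset

def IsWindowMin (p : ℕ) (H : ℕ → ℤ) (c : ℕ) : Prop := ∀ k < p, H c ≤ H (c + k)

section WindowMin

variable {p : ℕ} {H : ℕ → ℤ}

lemma exists_isWindowMin (hp : 0 < p) (hH : ∀ m, H (m + p) = H m - 1) :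
    ∃ c < p, IsWindowMin p H c := by
  classical
  have hmin : ∃ m, m < p ∧ ∀ m' < p, H m ≤ H m' := by
    obtain ⟨m, hm, hmin⟩ := (range p).exists_min_image H (nonempty_range_iff.2 hp.ne')
    exact ⟨m, mem_range.1 hm, fun m' hm' => hmin m' (mem_range.2 hm')⟩
  -- The least minimiser on `[0, p)` works: past the period, `H` has dropped by one from a value
  -- strictly above the minimum.
  obtain ⟨hcp, hcmin⟩ := Nat.find_spec hmin
  refine ⟨Nat.find hmin, hcp, fun k _ => ?_⟩
  rcases lt_or_ge (Nat.find hmin + k) p with hlt | hge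
  · exact hcmin _ hlt
  · obtain ⟨m, hm⟩ : ∃ m, Nat.find hmin + k = m + p := ⟨_, (Nat.sub_add_cancel hge).symm⟩
    have hmc : m < Nat.find hmin := by omega
    obtain ⟨m', hm'p, hm'⟩ : ∃ m' < p, H m' < H m := by
      simpa [hmc.trans hcp] using Nat.find_min hmin hmc
    rw [hm, hH]
    linarith [hcmin m' hm'p]

lemma eq_of_isWindowMin (hH : ∀ m, H (m + p) = H m - 1) {a b : ℕ} (ha : a < p) (hb : b < p)
    (hHa : IsWindowMin p H a) (hHb : IsWindowMin p H b) : a = b := by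
  have not_lt_of_isWindowMin :
      ∀ {a b}, b < p → IsWindowMin p H a → IsWindowMin p H b → ¬ a < b := by
    -- `H a ≤ H b ≤ H (a + p) = H a - 1`
    intro a b hb hHa hHb hab
    have hab' := hHa (b - a) (by omega)
    have hba := hHb (a + p - b) (by omega)
    rw [Nat.add_sub_cancel' hab.le] at hab'
    rw [show b + (a + p - b) = a + p by omega, hH] at hba
    linarith
  exact le_antisymm (le_of_not_gt (not_lt_of_isWindowMin ha hHb hHa))
    (le_of_not_gt (not_lt_of_isWindowMin hb hHa hHb))

end WindowMin

section CycleLemma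

variable {p : ℕ} (x : ZMod p → ℤ)

def prefixSum (m : ℕ) : ℤ := ∑ t ∈ range m, x t

lemma sum_range_natCast_add (m k : ℕ) :
    ∑ t ∈ range k, x (m + t) = prefixSum x (m + k) - prefixSum x m := by
  rw [prefixSum, prefixSum, sum_range_add]
  push_cast
  ring

lemma ZMod.sum_range_natCast [NeZero p] {M : Type*} [AddCommMonoid M] (g : ZMod p → M) :
    ∑ t ∈ range p, g t = ∑ a, g a :=
  sum_nbij' (fun t => (t : ZMod p)) ZMod.val (fun _ _ => mem_univ _)
    (fun a _ => mem_range.2 (ZMod.val_lt a)) (fun _ ht => ZMod.val_cast_of_lt (mem_range.1 ht))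
    (fun a _ => ZMod.natCast_zmod_val a) (fun _ _ => rfl)

lemma prefixSum_add_period [NeZero p] (hx : ∑ a, x a = -1) (m : ℕ) :
    prefixSum x (m + p) = prefixSum x m - 1 := by
  have hperiod : ∑ t ∈ range p, x (m + t) = -1 := by
    rw [ZMod.sum_range_natCast (fun a => x ((m : ZMod p) + a)), ← hx]
    exact Equiv.sum_comp (Equiv.addLeft (m : ZMod p)) x
  linarith [sum_range_natCast_add x m p]

theorem existsUnique_forall_sum_range_nonneg [NeZero p] (hx : ∑ a, x a = -1) :
    ∃! c : ZMod p, ∀ k < p, 0 ≤ ∑ t ∈ range k, x (c + t) := by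
  have hH := prefixSum_add_period x hx
  have hc : ∀ c : ZMod p, (∀ k < p, 0 ≤ ∑ t ∈ range k, x (c + t)) ↔
      IsWindowMin p (prefixSum x) c.val := by
    intro c
    simp only [IsWindowMin, ← sub_nonneg (a := prefixSum x _), ← sum_range_natCast_add,
      ZMod.natCast_zmod_val]
  refine (existsUnique_congr hc).2 ?_
  obtain ⟨c, hcp, hmin⟩ := exists_isWindowMin (NeZero.pos p) hH
  have hval : (c : ZMod p).val = c := ZMod.val_cast_of_lt hcp
  refine ⟨c, by simpa only [hval] using hmin, fun c' hc' => ZMod.val_injective p ?_⟩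
  rw [hval]
  exact eq_of_isWindowMin hH (ZMod.val_lt c') hcp hc' hmin

end CycleLemma

lemma card_filter_comp_perm {α : Type*} [Fintype α] (σ : Equiv.Perm α) (P : α → Prop)
    [DecidablePred P] : #{i | P (σ i)} = #{i | P i} :=
  card_equiv σ (by simp)

lemma card_filter_apply_eq_apply {ι R : Type*} [Fintype ι] [DecidableEq ι] [Fintype R]
    [DecidableEq R] {i j : ι} (hij : i ≠ j) :
    #{f : ι → R | f i = f j} = Fintype.card R ^ (Fintype.card ι - 1) := by
  calc #{f : ι → R | f i = f j} = #(univ : Finset ({x // x ≠ j} → R)) := by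
        refine card_nbij' (fun f x => f x)
          (fun g x => if h : x = j then g ⟨i, hij⟩ else g ⟨x, h⟩)
          (fun _ _ => mem_coe.2 (mem_univ _)) (fun g _ => by simp) (fun f hf => ?_)
          (fun g _ => by ext x; simp [x.2])
        funext x
        by_cases hx : x = j
        · subst hx
          simpa using (mem_filter.1 hf).2
        · simp [hx]
    _ = Fintype.card R ^ (Fintype.card ι - 1) := by
        rw [card_univ, Fintype.card_fun, Fintype.card_subtype_compl, Fintype.card_subtype_eq]

lemma card_filter_fst_lt_snd (n : ℕ) : #{p : Fin n × Fin n | p.1 < p.2} = n.choose 2 := by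
  simpa using card_product_filter_lt (s := (univ : Finset (Fin n)))

section ParkingFunctions

variable {n : ℕ}

lemma forall_le_iff_forall_le_card_filter {b : Fin n → Fin n} (hb : Monotone b) :
    (∀ m, (b m : ℕ) ≤ m) ↔ ∀ k ≤ n, k ≤ #{m | (b m : ℕ) < k} := by
  constructor
  · intro h k hk
    calc k = #{m : Fin n | (m : ℕ) < k} := by rw [Fin.card_filter_val_lt, min_eq_right hk]
      _ ≤ #{m | (b m : ℕ) < k} :=
        card_le_card fun m => by simpa using fun hm => (h m).trans_lt hm
  · intro h m
    by_contra! hm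
    have hsub : #{m' | (b m' : ℕ) < m + 1} ≤ #{m' : Fin n | (m' : ℕ) < m} :=
      card_le_card fun m' => by
        simp only [mem_filter, mem_univ, true_and]
        intro hm'
        by_contra! hle
        have := hb (Fin.le_iff_val_le_val.2 hle)
        omega
    have := h (m + 1) m.isLt
    rw [Fin.card_filter_val_lt] at hsub
    omega

lemma isPF_iff_forall_le_card_filter (α : Fin n → Fin n) :
    IsPF n α ↔ ∀ k ≤ n, k ≤ #{i | (α i : ℕ) < k} := by
  constructor
  · rintro ⟨σ, hmono, hle⟩ k hk
    rw [← card_filter_comp_perm σ]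
    exact (forall_le_iff_forall_le_card_filter (b := α ∘ σ) (fun i j => hmono i j)).1 hle k hk
  · intro h
    refine ⟨Tuple.sort α, fun i j hij => Tuple.monotone_sort α hij,
      (forall_le_iff_forall_le_card_filter (Tuple.monotone_sort α)).2 fun k hk => ?_⟩
    rw [Function.comp_def, card_filter_comp_perm (Tuple.sort α) (fun i => (α i : ℕ) < k)]
    exact h k hk

lemma isPF_comp_perm_iff (α : Fin n → Fin n) (τ : Equiv.Perm (Fin n)) :
    IsPF n (α ∘ τ) ↔ IsPF n α := by
  simp only [isPF_iff_forall_le_card_filter, Function.comp_apply]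
  exact forall₂_congr fun k _ => by rw [card_filter_comp_perm τ (fun i => (α i : ℕ) < k)]

lemma card_isPF_lt_comm (i j : Fin n) :
    #{α | IsPF n α ∧ α j < α i} = #{α | IsPF n α ∧ α i < α j} := by
  refine card_nbij' (· ∘ Equiv.swap i j) (· ∘ Equiv.swap i j) ?_ ?_ ?_ ?_ <;>
    intro α <;> simp [isPF_comp_perm_iff, funext_iff]

def IsPFMod (n : ℕ) (f : Fin n → ZMod (n + 1)) : Prop := ∀ k ≤ n, k ≤ #{i | (f i).val < k}

instance : DecidablePred (IsPFMod n) := fun _ => by unfold IsPFMod; infer_instance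

def toZMod (α : Fin n → Fin n) : Fin n → ZMod (n + 1) := fun i => ((α i : ℕ) : ZMod (n + 1))

lemma val_toZMod (α : Fin n → Fin n) (i : Fin n) : (toZMod α i).val = α i :=
  ZMod.val_cast_of_lt (by omega)

lemma toZMod_apply_inj {α : Fin n → Fin n} {i j : Fin n} :
    toZMod α i = toZMod α j ↔ α i = α j := by
  rw [← (ZMod.val_injective _).eq_iff, val_toZMod, val_toZMod, Fin.val_inj]

lemma toZMod_injective : Function.Injective (toZMod (n := n)) := fun α β h =>
  funext fun i => Fin.ext <| by rw [← val_toZMod, ← val_toZMod, h]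

lemma isPF_iff_isPFMod (α : Fin n → Fin n) : IsPF n α ↔ IsPFMod n (toZMod α) := by
  simp only [isPF_iff_forall_le_card_filter, IsPFMod, val_toZMod]

lemma IsPFMod.exists_toZMod_eq {f : Fin n → ZMod (n + 1)} (hf : IsPFMod n f) :
    ∃ α, toZMod α = f := by
  have hall : #{i | (f i).val < n} = Fintype.card (Fin n) :=
    le_antisymm (card_le_univ _) (by simpa using hf n le_rfl)
  have hlt := filter_eq_self.1 (eq_univ_of_card _ hall)
  exact ⟨fun i => ⟨(f i).val, hlt i (mem_univ i)⟩,
    funext fun i => ZMod.natCast_zmod_val (f i)⟩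

lemma card_filter_val_sub_lt (f : Fin n → ZMod (n + 1)) (c : ZMod (n + 1)) {k : ℕ}
    (hk : k ≤ n + 1) : #{i | (f i - c).val < k} = ∑ t ∈ range k, #{i | f i = c + t} := by
  rw [card_eq_sum_card_fiberwise (f := fun i => (f i - c).val) (t := range k)
    (fun i hi => mem_range.2 (mem_filter.1 hi).2)]
  refine sum_congr rfl fun t ht => congrArg card (ext fun i => ?_)
  have htk := mem_range.1 ht
  simp only [mem_filter, mem_univ, true_and]
  constructor
  · rintro ⟨-, rfl⟩
    rw [ZMod.natCast_zmod_val, add_sub_cancel]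
  · intro h
    rw [h, add_sub_cancel_left, ZMod.val_cast_of_lt (by omega)]
    exact ⟨htk, rfl⟩

lemma isPFMod_sub_iff (f : Fin n → ZMod (n + 1)) (c : ZMod (n + 1)) :
    IsPFMod n (fun i => f i - c) ↔
      ∀ k < n + 1, 0 ≤ ∑ t ∈ range k, ((#{i | f i = c + t} : ℤ) - 1) := by
  refine forall_congr' fun k => ?_
  rw [Nat.lt_succ_iff]
  refine imp_congr_right fun hk => ?_
  rw [card_filter_val_sub_lt f c (by omega), sum_sub_distrib, sum_const, card_range,
    nsmul_one, sub_nonneg]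
  exact_mod_cast Iff.rfl

theorem existsUnique_isPFMod_sub (f : Fin n → ZMod (n + 1)) :
    ∃! c, IsPFMod n (fun i => f i - c) := by
  simp_rw [isPFMod_sub_iff]
  refine existsUnique_forall_sum_range_nonneg (fun a => (#{i | f i = a} : ℤ) - 1) ?_
  rw [sum_sub_distrib, ← Nat.cast_sum, ← card_eq_sum_card_fiberwise (fun _ _ => mem_univ _)]
  simp

theorem card_filter_isPFMod_mul (Q : (Fin n → ZMod (n + 1)) → Prop) [DecidablePred Q]
    (hQ : ∀ f c, Q (fun i => f i - c) ↔ Q f) :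
    #{f | IsPFMod n f ∧ Q f} * (n + 1) = #{f | Q f} := by
  calc #{f | IsPFMod n f ∧ Q f} * (n + 1)
        = ∑ c : ZMod (n + 1), #{f | IsPFMod n (fun i => f i - c) ∧ Q f} := by
          rw [sum_congr rfl fun c _ => ?_, sum_const, card_univ, ZMod.card, smul_eq_mul, mul_comm]
          exact card_equiv (Equiv.subRight fun _ => c) fun f => by
            simp only [mem_filter, mem_univ, true_and, Equiv.subRight_apply]
            exact and_congr_right' (hQ f c).symm
    _ = ∑ f, #{c | IsPFMod n (fun i => f i - c) ∧ Q f} :=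
          (sum_card_bipartiteAbove_eq_sum_card_bipartiteBelow _).symm
    _ = ∑ f, if Q f then 1 else 0 := sum_congr rfl fun f _ => by
          split_ifs with hf
          · simpa [hf, card_eq_one_iff_existsUnique] using existsUnique_isPFMod_sub f
          · simp [hf]
    _ = #{f | Q f} := (card_filter _ _).symm

theorem card_filter_isPF_mul (Q : (Fin n → ZMod (n + 1)) → Prop) [DecidablePred Q]
    (hQ : ∀ f c, Q (fun i => f i - c) ↔ Q f) :
    #{α | IsPF n α ∧ Q (toZMod α)} * (n + 1) = #{f | Q f} := by
  rw [← card_filter_isPFMod_mul Q hQ, ← card_image_of_injective _ toZMod_injective]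
  congr 2
  ext f
  simp only [mem_image, mem_filter, mem_univ, true_and]
  constructor
  · rintro ⟨α, ⟨hα, hQα⟩, rfl⟩
    exact ⟨(isPF_iff_isPFMod α).1 hα, hQα⟩
  · rintro ⟨hf, hQf⟩
    obtain ⟨α, rfl⟩ := hf.exists_toZMod_eq
    exact ⟨α, ⟨(isPF_iff_isPFMod α).2 hf, hQf⟩, rfl⟩

theorem card_isPF : #{α | IsPF n α} = (n + 1) ^ (n - 1) := by
  have h := card_filter_isPF_mul (n := n) (fun _ => True) (fun _ _ => Iff.rfl)
  simp only [and_true, filter_true, card_univ, Fintype.card_pi, ZMod.card, prod_const,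
    Fintype.card_fin] at h
  rcases n with _ | m
  · simpa using h
  · exact Nat.eq_of_mul_eq_mul_right (by omega : 0 < m + 1 + 1)
      (by rw [h, Nat.add_sub_cancel, pow_succ])

theorem card_isPF_apply_eq {i j : Fin n} (hij : i ≠ j) :
    #{α | IsPF n α ∧ α i = α j} = (n + 1) ^ (n - 2) := by
  have h := card_filter_isPF_mul (fun f => f i = f j) fun f c => sub_left_inj
  simp only [toZMod_apply_inj, card_filter_apply_eq_apply hij, ZMod.card, Fintype.card_fin] at h
  obtain ⟨m, rfl⟩ : ∃ m, n = m + 2 := ⟨n - 2, by omega⟩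
  exact Nat.eq_of_mul_eq_mul_right (by omega) (h.trans (pow_succ _ _))

theorem two_mul_card_isPF_lt {i j : Fin n} (hij : i < j) :
    2 * #{α | IsPF n α ∧ α j < α i} = n * (n + 1) ^ (n - 2) := by
  have hsplit : #{α | IsPF n α} = #{α | IsPF n α ∧ α j < α i} +
      #{α | IsPF n α ∧ α i < α j} + #{α | IsPF n α ∧ α i = α j} := by
    simp only [card_filter, ← sum_add_distrib]
    refine sum_congr rfl fun α _ => ?_
    by_cases hα : IsPF n α
    · rcases lt_trichotomy (α i) (α j) with h | h | h
      · simp [hα, h, h.ne, h.not_gt]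
      · simp [hα, h]
      · simp [hα, h, h.ne', h.not_gt]
    · simp [hα]
  rw [card_isPF, ← card_isPF_lt_comm i j, card_isPF_apply_eq hij.ne] at hsplit
  obtain ⟨m, rfl⟩ : ∃ m, n = m + 2 := ⟨n - 2, by omega⟩
  rw [show m + 2 - 1 = m + 1 from rfl, pow_succ] at hsplit
  rw [Nat.add_sub_cancel] at hsplit ⊢
  linarith

end ParkingFunctions

theorem total_inversions_parking_functions_general (n : ℕ) :
    2 * ∑ α ∈ Finset.univ.filter (fun α : Fin n → Fin n => IsPF n α), invCount n α =
      n * (n + 1) ^ (n - 2) * Nat.choose n 2 := by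
  set pairs : Finset (Fin n × Fin n) := {p | p.1 < p.2}
  have hinv : ∀ α, invCount n α = #{p ∈ pairs | α p.2 < α p.1} :=
    fun α => by rw [invCount, filter_filter]
  calc 2 * ∑ α ∈ {α | IsPF n α}, invCount n α
        = 2 * ∑ p ∈ pairs, #{α ∈ {α | IsPF n α} | α p.2 < α p.1} := by
          simp_rw [hinv]
          exact congrArg (2 * ·) (sum_card_bipartiteAbove_eq_sum_card_bipartiteBelow _)
    _ = ∑ p ∈ pairs, n * (n + 1) ^ (n - 2) := by
          rw [mul_sum]
          refine sum_congr rfl fun p hp => ?_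
          rw [filter_filter]
          exact two_mul_card_isPF_lt (mem_filter.1 hp).2
    _ = n * (n + 1) ^ (n - 2) * n.choose 2 := by
          rw [sum_const, card_filter_fst_lt_snd, smul_eq_mul, mul_comm]

/-- The total number of inversions across all parking functions of length `n` is
`(n(n+1)^{n-2}/2) · C(n,2)`. -/
theorem total_inversions_parking_functions (n : ℕ) (hn : 1 ≤ n) :
    2 * ∑ α ∈ Finset.univ.filter (fun α : Fin n → Fin n => IsPF n α), invCount n α =
      n * (n + 1) ^ (n - 2) * Nat.choose n 2 :=
  total_inversions_parking_functions_general n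
end

section
/- For n >= 2, the total number of descents over all Cayley permutations of length n is ((n-1)/2)(Fub_n - Fub_{n-1}), i.e., 2 * sum_{w in C_n} des(w) = (n-1)(Fub_n - Fub_{n-1}). -/
/-!
The `m` adjacent positions of a word of length `m + 1` split into descents, ascents and
plateaus. Reversal maps Cayley permutations to Cayley permutations and exchanges descents with
ascents, so both have the same total `T`. A Cayley permutation is a word whose set of values is a
lower set; deleting the letter at `a + 1` from one with `w a = w (a + 1)` keeps its set of values,
and is a bijection onto the Cayley permutations of length `m` (such a word has a repeated letter,
so it never takes the largest value). Hence the plateaus total `m * Fub m`, and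
`2 T + m * Fub m = m * Fub (m + 1)`.
-/

/-- A Cayley permutation of length `n`, encoded with 0-indexed values (value `k : Fin n`
represents the positive integer `k+1`): if a value appears then all smaller values
appear. -/
def IsCayley (n : ℕ) (w : Fin n → Fin n) : Prop :=
  ∀ (i : Fin n) (v : Fin n), v ≤ w i → ∃ j, w j = v

instance (n : ℕ) : DecidablePred (IsCayley n) := fun _ => by unfold IsCayley; infer_instance

/-- `Fub m` is the number of Cayley permutations of length `m` (the `m`-th Fubini
number). -/
def Fub (m : ℕ) : ℕ :=
  (Finset.univ.filter (fun w : Fin m → Fin m => IsCayley m w)).card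

/-- The number of descents of a word: indices `i ∈ [n-1]` with `w i > w (i+1)`. -/
def desCount (n : ℕ) (w : Fin n → Fin n) : ℕ :=
  (Finset.univ.filter
    (fun p : Fin n × Fin n => (p.1 : ℕ) + 1 = (p.2 : ℕ) ∧ w p.2 < w p.1)).card

open Finset

theorem isCayley_iff_isLowerSet_range {n : ℕ} {w : Fin n → Fin n} :
    IsCayley n w ↔ IsLowerSet (Set.range w) := by
  constructor
  · rintro hw u v hvu ⟨i, rfl⟩
    exact hw i v hvu
  · intro hw i v hv
    exact hw hv ⟨i, rfl⟩

def cayleyWords (n : ℕ) : Finset (Fin n → Fin n) := univ.filter (IsCayley n)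

theorem card_cayleyWords (n : ℕ) : #(cayleyWords n) = Fub n := rfl

section AdjacentPositions

variable {α : Type*} [LinearOrder α] {m : ℕ}

def descents (w : Fin (m + 1) → α) : Finset (Fin m) :=
  univ.filter fun a => w a.succ < w a.castSucc

def ascents (w : Fin (m + 1) → α) : Finset (Fin m) :=
  univ.filter fun a => w a.castSucc < w a.succ

def plateaus (w : Fin (m + 1) → α) : Finset (Fin m) :=
  univ.filter fun a => w a.castSucc = w a.succ

theorem desCount_eq_card_descents (w : Fin (m + 1) → Fin (m + 1)) :
    desCount (m + 1) w = #(descents w) := by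
  symm
  refine card_bij (fun a _ => (a.castSucc, a.succ)) ?_ ?_ ?_
  · intro a ha
    simpa [descents] using ha
  · intro a _ b _ hab
    simpa using congrArg Prod.fst hab
  · rintro ⟨i, j⟩ hij
    simp only [mem_filter, mem_univ, true_and] at hij
    obtain ⟨hadj, hdes⟩ := hij
    obtain ⟨a, rfl⟩ : ∃ a : Fin m, a.castSucc = i := ⟨⟨i, by omega⟩, rfl⟩
    obtain rfl : j = a.succ := Fin.ext (by simp [← hadj])
    exact ⟨a, by simpa [descents] using hdes, rfl⟩

theorem card_descents_add_card_ascents_add_card_plateaus (w : Fin (m + 1) → α) :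
    #(descents w) + #(ascents w) + #(plateaus w) = m := by
  simp only [descents, ascents, plateaus, card_filter, ← sum_add_distrib]
  trans ∑ _a : Fin m, 1
  · refine sum_congr rfl fun a _ => ?_
    rcases lt_trichotomy (w a.castSucc) (w a.succ) with h | h | h
    · simp [h, h.not_gt, h.ne]
    · simp [h]
    · simp [h, h.not_gt, h.ne']
  · simp

theorem descents_comp_rev (w : Fin (m + 1) → α) :
    descents (w ∘ Fin.rev) = (ascents w).map Fin.revPerm.toEmbedding := by
  ext a
  simp [descents, ascents, Fin.rev_succ, Fin.rev_castSucc]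

end AdjacentPositions

theorem IsCayley.comp_rev {n : ℕ} {w : Fin n → Fin n} (hw : IsCayley n w) :
    IsCayley n (w ∘ Fin.rev) := by
  rw [isCayley_iff_isLowerSet_range] at hw ⊢
  rwa [Fin.rev_surjective.range_comp]

theorem sum_card_ascents_eq_sum_card_descents (m : ℕ) :
    ∑ w ∈ cayleyWords (m + 1), #(ascents w) = ∑ w ∈ cayleyWords (m + 1), #(descents w) := by
  have hrev : ∀ w ∈ cayleyWords (m + 1), w ∘ Fin.rev ∈ cayleyWords (m + 1) := by
    simp only [cayleyWords, mem_filter, mem_univ, true_and]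
    exact fun w hw => hw.comp_rev
  have hinv : ∀ w ∈ cayleyWords (m + 1), (w ∘ Fin.rev) ∘ Fin.rev = w := fun w _ => by
    rw [Function.comp_assoc, Fin.rev_involutive.comp_self, Function.comp_id]
  refine sum_nbij' (· ∘ Fin.rev) (· ∘ Fin.rev) hrev hrev hinv hinv fun w _ => ?_
  rw [descents_comp_rev, card_map]

theorem card_filter_range_apply_castSucc_eq_apply_succ {α : Type*} [Fintype α] [DecidableEq α]
    {m : ℕ} (Q : Set α → Prop) [DecidablePred Q] (a : Fin m) :
    #{w : Fin (m + 1) → α | Q (Set.range w) ∧ w a.castSucc = w a.succ} =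
      #{u : Fin m → α | Q (Set.range u)} := by
  have hrange : ∀ w : Fin (m + 1) → α, w a.castSucc = w a.succ →
      Set.range (Fin.removeNth a.succ w) = Set.range w := by
    intro w hw
    conv_rhs => rw [← Fin.insertNth_self_removeNth a.succ w]
    rw [Fin.range_insertNth]
    have hmem : w a.succ ∈ Set.range (Fin.removeNth a.succ w) :=
      ⟨a, by simp [Fin.removeNth_apply, hw]⟩
    exact (Set.insert_eq_of_mem hmem).symm
  refine card_nbij' (Fin.removeNth a.succ) (fun u => Fin.insertNth a.succ (u a) u) ?_ ?_ ?_ ?_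
  · intro w hw
    simp only [coe_filter, mem_univ, true_and, Set.mem_ofPred_eq] at hw ⊢
    rw [hrange w hw.2]
    exact hw.1
  · intro u hu
    simp only [coe_filter, mem_univ, true_and, Set.mem_ofPred_eq] at hu ⊢
    set v : Fin (m + 1) → α := Fin.insertNth a.succ (u a) u with hv
    have hw : v a.castSucc = v a.succ := by
      rw [hv, Fin.insertNth_apply_same, ← Fin.succAbove_succ_self, Fin.insertNth_apply_succAbove]
    rw [← hrange _ hw, Fin.removeNth_insertNth]
    exact ⟨hu, hw⟩
  · intro w hw
    simp only [coe_filter, mem_univ, true_and, Set.mem_ofPred_eq] at hw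
    simp [Fin.removeNth_apply, hw.2]
  · intro u _
    simp

theorem last_notMem_range_of_isLowerSet {m : ℕ} {u : Fin m → Fin (m + 1)}
    (hu : IsLowerSet (Set.range u)) : Fin.last m ∉ Set.range u := by
  intro hlast
  have hsurj : Function.Surjective u := fun v => hu (Fin.le_last v) hlast
  simpa using Fintype.card_le_of_surjective u hsurj

theorem isLowerSet_range_castSucc_comp_iff {m : ℕ} {u : Fin m → Fin m} :
    IsLowerSet (Set.range (Fin.castSucc ∘ u)) ↔ IsLowerSet (Set.range u) := by
  constructor
  · rintro hu x y hyx ⟨k, rfl⟩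
    obtain ⟨j, hj⟩ := hu (Fin.castSucc_le_castSucc_iff.2 hyx) ⟨k, rfl⟩
    exact ⟨j, Fin.castSucc_injective m hj⟩
  · rintro hu x y hyx ⟨k, rfl⟩
    have hy : y ≠ Fin.last m := (hyx.trans_lt (Fin.castSucc_lt_last _)).ne
    obtain ⟨j, hj⟩ := hu ((Fin.castPred_le_iff hy).2 hyx : y.castPred hy ≤ u k) ⟨k, rfl⟩
    exact ⟨j, by simp [hj]⟩

open scoped Classical in
theorem card_isLowerSet_range_fin_succ_eq (m : ℕ) :
    #{u : Fin m → Fin (m + 1) | IsLowerSet (Set.range u)} =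
      #{u : Fin m → Fin m | IsLowerSet (Set.range u)} := by
  symm
  refine card_bij (fun u _ => Fin.castSucc ∘ u) ?_ ?_ ?_
  · intro u hu
    simpa [isLowerSet_range_castSucc_comp_iff] using hu
  · intro u _ v _ huv
    exact (Fin.castSucc_injective m).comp_left huv
  · intro v hv
    simp only [mem_filter, mem_univ, true_and] at hv
    have hne : ∀ k, v k ≠ Fin.last m := fun k hk =>
      last_notMem_range_of_isLowerSet hv ⟨k, hk⟩
    have hv' : Fin.castSucc ∘ (fun k => (v k).castPred (hne k)) = v := by
      funext k
      simp
    refine ⟨fun k => (v k).castPred (hne k), ?_, hv'⟩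
    rw [mem_filter, ← isLowerSet_range_castSucc_comp_iff, hv']
    exact ⟨mem_univ _, hv⟩

theorem card_filter_cayleyWords_apply_castSucc_eq_apply_succ {m : ℕ} (a : Fin m) :
    #{w ∈ cayleyWords (m + 1) | w a.castSucc = w a.succ} = Fub m := by
  classical
  calc #{w ∈ cayleyWords (m + 1) | w a.castSucc = w a.succ}
      = #{w : Fin (m + 1) → Fin (m + 1) |
          IsLowerSet (Set.range w) ∧ w a.castSucc = w a.succ} := by
        simp [cayleyWords, filter_filter, isCayley_iff_isLowerSet_range]
    _ = #{u : Fin m → Fin (m + 1) | IsLowerSet (Set.range u)} :=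
        card_filter_range_apply_castSucc_eq_apply_succ _ a
    _ = #{u : Fin m → Fin m | IsLowerSet (Set.range u)} := card_isLowerSet_range_fin_succ_eq m
    _ = Fub m := by simp [Fub, isCayley_iff_isLowerSet_range]

theorem sum_card_plateaus (m : ℕ) : ∑ w ∈ cayleyWords (m + 1), #(plateaus w) = m * Fub m := by
  calc ∑ w ∈ cayleyWords (m + 1), #(plateaus w)
      = ∑ a : Fin m, #{w ∈ cayleyWords (m + 1) | w a.castSucc = w a.succ} :=
        sum_card_bipartiteAbove_eq_sum_card_bipartiteBelow _
    _ = m * Fub m := by simp [card_filter_cayleyWords_apply_castSucc_eq_apply_succ]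

theorem two_mul_sum_card_descents_add_mul_Fub (m : ℕ) :
    2 * ∑ w ∈ cayleyWords (m + 1), #(descents w) + m * Fub m = m * Fub (m + 1) := by
  have htotal : ∑ w ∈ cayleyWords (m + 1), (#(descents w) + #(ascents w) + #(plateaus w)) =
      Fub (m + 1) * m := by
    simp [card_descents_add_card_ascents_add_card_plateaus, card_cayleyWords]
  rw [sum_add_distrib, sum_add_distrib, sum_card_ascents_eq_sum_card_descents,
    sum_card_plateaus] at htotal
  linarith

theorem total_descents_cayley_general (n : ℕ) :
    2 * ∑ w ∈ Finset.univ.filter (fun w : Fin n → Fin n => IsCayley n w), desCount n w =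
      (n - 1) * (Fub n - Fub (n - 1)) := by
  obtain _ | m := n
  · simp [desCount]
  change 2 * ∑ w ∈ cayleyWords (m + 1), desCount (m + 1) w = _
  rw [Nat.add_sub_cancel, Nat.mul_sub]
  simp only [desCount_eq_card_descents]
  exact Nat.eq_sub_of_add_eq (two_mul_sum_card_descents_add_mul_Fub m)

/-- For `n ≥ 2`, twice the total number of descents over all Cayley permutations of
length `n` equals `(n-1)(Fub n - Fub (n-1))`. -/
theorem total_descents_cayley (n : ℕ) (hn : 2 ≤ n) :
    2 * ∑ w ∈ Finset.univ.filter (fun w : Fin n → Fin n => IsCayley n w), desCount n w =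
      (n - 1) * (Fub n - Fub (n - 1)) :=
  total_descents_cayley_general n
end
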